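/- The Laplace mechanism M(D) = Q(D) + Laplace(0, Δf/ε) is ε-differentially private: for any two datasets D, D' with |Q(D) − Q(D')| ≤ Δf and any measurable set S ⊆ ℝ, P(M(D) ∈ S) ≤ e^ε · P(M(D') ∈ S). -/

import Mathlib

open MeasureTheory

open Real Set in
lemma lap_int (b : ℝ) (hb : 0 < b) (q : ℝ) :
    Integrable (fun x : ℝ => Real.exp (-(b * |x - q|))) := by
  have h0 : Integrable (fun x : ℝ => Real.exp (-(b * |x|))) := by
    set g : ℝ → ℝ := fun x => Real.exp (-(b * |x|)) with hg
    have hIoi : IntegrableOn g (Ioi 0) := by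
      apply (exp_neg_integrableOn_Ioi 0 hb).congr_fun ?_ measurableSet_Ioi
      intro x hx
      simp [hg, abs_of_pos (show (0:ℝ) < x from hx), neg_mul]
    have h1 : Integrable ((Ioi (0:ℝ)).indicator g) :=
      (integrable_indicator_iff measurableSet_Ioi).2 hIoi
    have h2 := h1.comp_neg
    have heq : (fun x => (Ioi (0:ℝ)).indicator g (-x)) = (Iio (0:ℝ)).indicator g := by
      funext x
      by_cases hx : x < 0
      · simp [indicator, hx, hg, abs_neg]
      · simp [indicator, hx, not_lt.mpr (not_lt.1 hx)]
    rw [heq] at h2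
    have hIio : IntegrableOn g (Iio 0) := (integrable_indicator_iff measurableSet_Iio).1 h2
    have h3 := hIio.union hIoi
    rw [Iio_union_Ioi] at h3
    have hc : IntegrableOn g ({(0:ℝ)}) := (integrableOn_singleton_iff (f := g) (x := 0) (by simp)).2 (Or.inr (by simp))
    have h4 := h3.union hc
    rwa [compl_union_self, integrableOn_univ] at h4
  simpa using h0.comp_sub_right q

/-- The Laplace mechanism `M(D) = Q(D) + Laplace(0, Δf/ε)` is `ε`-differentially
private: for datasets `D, D'` with `|Q(D) − Q(D')| ≤ Δf` and any measurable set `S`,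
`P(M(D) ∈ S) ≤ e^ε · P(M(D') ∈ S)`, where the output distribution of `M` on a
dataset with query value `q` has density `(ε/(2Δf)) exp(−ε|x − q|/Δf)`. -/
theorem stmt_9 (ε Δf : ℝ) (hε : 0 < ε) (hΔ : 0 < Δf)
    (qD qD' : ℝ) (h : |qD - qD'| ≤ Δf)
    (S : Set ℝ) (hS : MeasurableSet S) :
    ∫ x in S, (ε / (2 * Δf)) * Real.exp (-(ε * |x - qD|) / Δf)
      ≤ Real.exp ε * ∫ x in S, (ε / (2 * Δf)) * Real.exp (-(ε * |x - qD'|) / Δf) := by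
  have hb : 0 < ε / Δf := div_pos hε hΔ
  have key : ∀ q : ℝ, Integrable (fun x : ℝ => (ε / (2 * Δf)) * Real.exp (-(ε * |x - q|) / Δf)) := by
    intro q
    have := (lap_int (ε / Δf) hb q).const_mul (ε / (2 * Δf))
    apply this.congr
    filter_upwards with x
    ring_nf
  rw [← integral_const_mul]
  apply setIntegral_mono_on ((key qD).integrableOn) (((key qD').const_mul _).integrableOn) hS
  intro x _
  rw [← mul_assoc, mul_comm (Real.exp ε), mul_assoc]
  have hc : 0 ≤ ε / (2 * Δf) := by positivity
  apply mul_le_mul_of_nonneg_left _ hc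
  rw [← Real.exp_add]
  apply Real.exp_le_exp.2
  have h1 : |x - qD'| - |x - qD| ≤ |qD - qD'| := by
    have := abs_sub_abs_le_abs_sub (x - qD') (x - qD)
    simpa [abs_sub_comm] using this
  have h2 : -(ε * |x - qD|) / Δf - -(ε * |x - qD'|) / Δf ≤ ε := by
    rw [div_sub_div_same, div_le_iff₀ hΔ]
    nlinarith
  linarith
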